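/- arXiv:2009.07169 — 2 statements merged into one kernel-verified Lean document; each statement's English description precedes it below -/
import Mathlib

section
/- Uniqueness for the vector measure-valued Skorokhod problem (VMVSP): let P be a convergent substochastic K×K matrix, R = I − Pᵀ, and (α, μ) ∈ D_M^{↑K} × D^{↑K} with μ(0) = 0. If (ξ, β, ι) and (ξ', β', ι') both satisfy, for every x ≥ 0: (1) ξ[0,x] = α[0,x] − Rβ[0,x]; (2) ∫ ξ_s^i[0,x] dβ_s^i(x,∞) = 0 for all i; (3) ∫ ξ_s^i[0,x] dι^i(s) = 0 for all i; (4) β[0,∞) + ι = μ, then ξ = ξ', β = β', ι = ι'. -/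
open MeasureTheory Set
open scoped NNReal

/-- `stieltjesZero f g` encodes `∫_{[0,∞)} f dg = 0` for a nonnegative integrand `f`
and a nondecreasing right-continuous integrator `g` on `[0,∞)` with `g(0-) = 0`. -/
def stieltjesZero (f g : ℝ → ℝ) : Prop :=
  ∃ S : StieltjesFunction ℝ, (∀ t, 0 ≤ t → S t = g t) ∧ (∀ t, t < 0 → S t = 0) ∧
    ∫⁻ t in Ici (0:ℝ), ENNReal.ofReal (f t) ∂S.measure = 0

/-!
Fix a level `x`. Conditions (1)–(4) say that `z = ξ[0,x]` and `y = β(x,∞) + ι` solve, in each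
coordinate `j`, the one-dimensional Skorokhod problem `z_j = (w − Pᵀ y)_j + y_j` with
`w = α[0,x] − R μ`, so that `y_j = Γ((w − Pᵀ y)_j)` for the one-dimensional Skorokhod map
`Γ(v)(t) = sup_{s ≤ t} (−v s)⁺`. Since `Γ` is `1`-Lipschitz for the sup norm on `[0,t]`, the
vector `M` of sup distances on `[0,t]` between two such `y` satisfies `M ≤ Pᵀ M`; iterating and
using `Pⁿ → 0` gives `M = 0`. So `β(x,∞) + ι` is determined for every `x`, hence so is
`β[0,x] = μ − (β(x,∞) + ι)`, then `ι` by (4) and `ξ` by (1).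
-/

open Filter Topology Matrix

-- `y = Γ(v)` on `[0,∞)`, stated with `IsLUB` so that no boundedness is hidden in `sSup`.
def IsSkorokhodRegulator (v y : ℝ → ℝ) : Prop :=
  ∀ t, 0 ≤ t → IsLUB ((fun s => max (-v s) 0) '' Icc 0 t) (y t)

namespace IsSkorokhodRegulator

variable {v v' y y' : ℝ → ℝ}

theorem nonneg (h : IsSkorokhodRegulator v y) {t : ℝ} (ht : 0 ≤ t) : 0 ≤ y t :=
  (le_max_right _ _).trans ((h t ht).1 (mem_image_of_mem _ (left_mem_Icc.2 ht)))

theorem monotoneOn (h : IsSkorokhodRegulator v y) : MonotoneOn y (Ici 0) :=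
  fun s hs t ht hst => (h s hs).mono (h t ht) (image_mono (Icc_subset_Icc_right hst))

theorem abs_sub_le (h : IsSkorokhodRegulator v y) (h' : IsSkorokhodRegulator v' y')
    {t D : ℝ} (ht : 0 ≤ t) (hD : ∀ s ∈ Icc 0 t, |v s - v' s| ≤ D) : |y t - y' t| ≤ D := by
  have hmax : ∀ s ∈ Icc 0 t, |max (-v s) 0 - max (-v' s) 0| ≤ D := fun s hs => by
    refine (abs_max_sub_max_le_abs _ _ _).trans ?_
    rw [neg_sub_neg, abs_sub_comm]
    exact hD s hs
  rw [abs_sub_le_iff, sub_le_iff_le_add, sub_le_iff_le_add]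
  constructor
  · refine (h t ht).2 ?_
    rintro _ ⟨s, hs, rfl⟩
    linarith [(abs_le.1 (hmax s hs)).2, (h' t ht).1 (mem_image_of_mem _ hs)]
  · refine (h' t ht).2 ?_
    rintro _ ⟨s, hs, rfl⟩
    linarith [(abs_le.1 (hmax s hs)).1, (h t ht).1 (mem_image_of_mem _ hs)]

end IsSkorokhodRegulator

theorem measure_le_of_forall_measure_Ioc_le (ν : Measure ℝ) {B : Set ℝ} {a : ℝ} {c : ENNReal}
    (hB : BddAbove B) (hBa : B ⊆ Ioi a) (h : ∀ b ∈ B, ν (Ioc a b) ≤ c) : ν B ≤ c := by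
  rcases B.eq_empty_or_nonempty with rfl | hne
  · simp
  by_cases hmax : sSup B ∈ B
  · exact (measure_mono fun s hs => (⟨hBa hs, le_csSup hB hs⟩ : s ∈ Ioc a (sSup B))).trans
      (h _ hmax)
  obtain ⟨u, hu_mono, hu_tendsto, hu_mem⟩ := exists_seq_tendsto_sSup hne hB
  have hcover : B ⊆ ⋃ n, Ioc a (u n) := fun b hb => by
    have hbmax : b < sSup B := (le_csSup hB hb).lt_of_ne fun hb' => hmax (hb' ▸ hb)
    obtain ⟨n, hn⟩ := (hu_tendsto.eventually (eventually_gt_nhds hbmax)).exists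
    exact mem_iUnion.2 ⟨n, hBa hb, hn.le⟩
  calc ν B ≤ ν (⋃ n, Ioc a (u n)) := measure_mono hcover
    _ = ⨆ n, ν (Ioc a (u n)) :=
      Monotone.measure_iUnion fun m n hmn => Ioc_subset_Ioc_right (hu_mono hmn)
    _ ≤ c := iSup_le fun n => h _ (hu_mem n)

theorem StieltjesFunction.measure_Ioc_inter_lt_eq_zero (S : StieltjesFunction ℝ) {z : ℝ → ℝ}
    {c t : ℝ} (hz : ∀ s ∈ Icc 0 t, S s - c ≤ z s)
    (hcompl : ∫⁻ s in Ici 0, ENNReal.ofReal (z s) ∂S.measure = 0) :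
    S.measure {s | s ∈ Ioc 0 t ∧ c < S s} = 0 := by
  have hmeas : Measurable fun s => ENNReal.ofReal (S s - c) :=
    (S.mono.measurable.sub_const c).ennreal_ofReal
  have hint : ∫⁻ s in Icc 0 t, ENNReal.ofReal (S s - c) ∂S.measure = 0 := by
    refine nonpos_iff_eq_zero.1 ?_
    calc ∫⁻ s in Icc 0 t, ENNReal.ofReal (S s - c) ∂S.measure
        ≤ ∫⁻ s in Icc 0 t, ENNReal.ofReal (z s) ∂S.measure :=
          setLIntegral_mono' measurableSet_Icc fun s hs => ENNReal.ofReal_le_ofReal (hz s hs)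
      _ ≤ ∫⁻ s in Ici 0, ENNReal.ofReal (z s) ∂S.measure :=
          lintegral_mono' (Measure.restrict_mono Icc_subset_Ici_self le_rfl) le_rfl
      _ = 0 := hcompl
  have hae := (ae_restrict_iff' measurableSet_Icc).1 ((lintegral_eq_zero_iff hmeas).1 hint)
  refine measure_mono_null (fun s hs => ?_) (ae_iff.1 hae)
  intro hs0
  exact (ENNReal.ofReal_pos.2 (sub_pos.2 hs.2)).ne' (hs0 (Ioc_subset_Icc_self hs.1))

theorem StieltjesFunction.isSkorokhodRegulator (S : StieltjesFunction ℝ) {v z : ℝ → ℝ}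
    (hS0 : S 0 = 0) (hz0 : ∀ s, 0 ≤ s → 0 ≤ z s) (hzv : ∀ s, 0 ≤ s → z s = v s + S s)
    (hcompl : ∫⁻ s in Ici 0, ENNReal.ofReal (z s) ∂S.measure = 0) :
    IsSkorokhodRegulator v S := by
  intro t ht
  have hS_Ioc : ∀ b, S.measure (Ioc 0 b) = ENNReal.ofReal (S b) := fun b => by
    rw [S.measure_Ioc, hS0, sub_zero]
  refine ⟨?_, fun c hc => ?_⟩
  · rintro _ ⟨s, hs, rfl⟩
    have hSs : S s ≤ S t := S.mono hs.2
    have hSs0 : 0 ≤ S s := hS0 ▸ S.mono hs.1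
    exact max_le (by linarith [hzv s hs.1, hz0 s hs.1]) (hSs0.trans hSs)
  have hc0 : 0 ≤ c := (le_max_right _ _).trans (hc (mem_image_of_mem _ (left_mem_Icc.2 ht)))
  have habove : S.measure {s | s ∈ Ioc 0 t ∧ c < S s} = 0 :=
    S.measure_Ioc_inter_lt_eq_zero (fun s hs => by
      linarith [hzv s hs.1, (le_max_left _ _).trans (hc (mem_image_of_mem _ hs))]) hcompl
  have hbelow : S.measure {s | s ∈ Ioc 0 t ∧ S s ≤ c} ≤ ENNReal.ofReal c :=
    measure_le_of_forall_measure_Ioc_le _ ⟨t, fun s hs => hs.1.2⟩ (fun s hs => hs.1.1)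
      fun b hb => (hS_Ioc b).trans_le (ENNReal.ofReal_le_ofReal hb.2)
  have hsplit : Ioc 0 t ⊆ {s | s ∈ Ioc 0 t ∧ c < S s} ∪ {s | s ∈ Ioc 0 t ∧ S s ≤ c} :=
    fun s hs => (lt_or_ge c (S s)).imp (⟨hs, ·⟩) (⟨hs, ·⟩)
  refine (ENNReal.ofReal_le_ofReal_iff hc0).1 ?_
  calc ENNReal.ofReal (S t) = S.measure (Ioc 0 t) := (hS_Ioc t).symm
    _ ≤ S.measure {s | s ∈ Ioc 0 t ∧ c < S s} + S.measure {s | s ∈ Ioc 0 t ∧ S s ≤ c} :=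
      (measure_mono hsplit).trans (measure_union_le _ _)
    _ ≤ ENNReal.ofReal c := by rw [habove, zero_add]; exact hbelow

namespace Matrix

variable {n : Type*} [Fintype n] {Q : Matrix n n ℝ}

theorem mulVec_mono_of_nonneg (hQ : ∀ i j, 0 ≤ Q i j) : Monotone (Q *ᵥ ·) :=
  fun _ _ huv i => dotProduct_le_dotProduct_of_nonneg_left huv fun j => hQ i j

theorem abs_mulVec_le (hQ : ∀ i j, 0 ≤ Q i j) (u : n → ℝ) (i : n) :
    |(Q *ᵥ u) i| ≤ (Q *ᵥ fun j => |u j|) i := by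
  refine (Finset.abs_sum_le_sum_abs _ _).trans_eq (Finset.sum_congr rfl fun j _ => ?_)
  rw [abs_mul, abs_of_nonneg (hQ i j)]

theorem nonpos_of_le_mulVec [DecidableEq n] (hQ : ∀ i j, 0 ≤ Q i j)
    (hconv : Tendsto (fun k : ℕ => Q ^ k) atTop (𝓝 0)) {M : n → ℝ} (hM : M ≤ Q *ᵥ M) :
    M ≤ 0 := by
  have hiter : ∀ k : ℕ, M ≤ Q ^ k *ᵥ M := by
    intro k
    induction k with
    | zero => rw [pow_zero, one_mulVec]
    | succ k ih =>
      rw [pow_succ', ← mulVec_mulVec]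
      exact hM.trans (mulVec_mono_of_nonneg hQ ih)
  have hlim : Tendsto (fun k : ℕ => Q ^ k *ᵥ M) atTop (𝓝 0) := by
    simpa [Function.comp_def] using
      ((continuous_id.matrix_mulVec continuous_const).tendsto 0).comp hconv
  exact ge_of_tendsto' hlim hiter

end Matrix

theorem IsSkorokhodRegulator.eq_of_tendsto_pow {n : Type*} [Fintype n] [DecidableEq n]
    (Q : Matrix n n ℝ) (hQ : ∀ i j, 0 ≤ Q i j) (hconv : Tendsto (fun k : ℕ => Q ^ k) atTop (𝓝 0))
    {w y y' : ℝ → n → ℝ}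
    (hy : ∀ j, IsSkorokhodRegulator (fun s => (w s - Q *ᵥ y s) j) (fun s => y s j))
    (hy' : ∀ j, IsSkorokhodRegulator (fun s => (w s - Q *ᵥ y' s) j) (fun s => y' s j))
    {t : ℝ} (ht : 0 ≤ t) : y t = y' t := by
  set M : n → ℝ := fun j => sSup ((fun s => |y s j - y' s j|) '' Icc 0 t)
  have hbdd : ∀ j, BddAbove ((fun s => |y s j - y' s j|) '' Icc 0 t) := fun j => by
    refine ⟨y t j + y' t j, ?_⟩
    rintro _ ⟨s, hs, rfl⟩
    rw [abs_le]
    constructor <;> linarith [(hy j).monotoneOn hs.1 ht hs.2, (hy' j).monotoneOn hs.1 ht hs.2,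
      (hy j).nonneg hs.1, (hy' j).nonneg hs.1]
  have hle : ∀ s ∈ Icc 0 t, ∀ j, |y s j - y' s j| ≤ M j := fun s hs j =>
    le_csSup (hbdd j) (mem_image_of_mem _ hs)
  have hM : M ≤ Q *ᵥ M := fun j => by
    refine csSup_le ((nonempty_Icc.2 ht).image _) ?_
    rintro _ ⟨s, hs, rfl⟩
    refine (hy j).abs_sub_le (hy' j) hs.1 fun r hr => ?_
    have hdiff : (w r - Q *ᵥ y r) j - (w r - Q *ᵥ y' r) j = (Q *ᵥ (y' r - y r)) j := by
      simp only [mulVec_sub, Pi.sub_apply]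
      ring
    rw [hdiff]
    refine (Matrix.abs_mulVec_le hQ _ j).trans (Matrix.mulVec_mono_of_nonneg hQ (fun k => ?_) j)
    rw [Pi.sub_apply, abs_sub_comm]
    exact hle r ⟨hr.1, hr.2.trans hs.2⟩ k
  have hM0 := Matrix.nonpos_of_le_mulVec hQ hconv hM
  funext j
  exact sub_eq_zero.1 (abs_nonpos_iff.1 ((hle t ⟨ht, le_rfl⟩ j).trans (hM0 j)))

theorem ext_of_toReal_measure_Iic {m m' : Measure ℝ≥0} [IsFiniteMeasure m] [IsFiniteMeasure m']
    (h : ∀ x, (m (Iic x)).toReal = (m' (Iic x)).toReal) : m = m' :=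
  Measure.ext_of_Iic m m' fun x =>
    (ENNReal.toReal_eq_toReal_iff' (measure_ne_top _ _) (measure_ne_top _ _)).1 (h x)

section VMVSP

variable {K : ℕ}

-- In the notation of the paper, `vmvspNetput = α[0,x] − Rμ` and `vmvspRegulator = β(x,∞) + ι`.
noncomputable def vmvspNetput (P : Matrix (Fin K) (Fin K) ℝ) (α : Fin K → ℝ → Measure ℝ≥0)
    (μ : ℝ → Fin K → ℝ) (x : ℝ≥0) (s : ℝ) : Fin K → ℝ :=
  (fun j => (α j s (Iic x)).toReal) - (1 - Pᵀ) *ᵥ μ s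

noncomputable def vmvspRegulator (β : Fin K → ℝ → Measure ℝ≥0) (ι : Fin K → ℝ → ℝ) (x : ℝ≥0)
    (s : ℝ) : Fin K → ℝ :=
  fun j => (β j s (Ioi x)).toReal + ι j s

theorem toReal_measure_Iic_eq_sub_vmvspRegulator (μ : ℝ → Fin K → ℝ)
    (β : Fin K → ℝ → Measure ℝ≥0) (ι : Fin K → ℝ → ℝ) (hβfin : ∀ j s, IsFiniteMeasure (β j s))
    (cond4 : ∀ i (t : ℝ), 0 ≤ t → ((β i t) univ).toReal + ι i t = μ t i)
    (x : ℝ≥0) (j : Fin K) {s : ℝ} (hs : 0 ≤ s) :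
    (β j s (Iic x)).toReal = μ s j - vmvspRegulator β ι x s j := by
  have hsplit := measureReal_add_measureReal_compl (μ := β j s) (measurableSet_Iic (a := x))
  rw [compl_Iic] at hsplit
  simp only [measureReal_def] at hsplit
  simp only [vmvspRegulator]
  linarith [cond4 j s hs]

theorem isSkorokhodRegulator_vmvspRegulator (P : Matrix (Fin K) (Fin K) ℝ)
    (α : Fin K → ℝ → Measure ℝ≥0) (μ : ℝ → Fin K → ℝ) (hμ0 : ∀ i, μ 0 i = 0)
    (ξ β : Fin K → ℝ → Measure ℝ≥0) (ι : Fin K → ℝ → ℝ)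
    (hβfin : ∀ j s, IsFiniteMeasure (β j s))
    (cond1 : ∀ (x : ℝ≥0) (t : ℝ), 0 ≤ t → ∀ i,
      ((ξ i t) (Iic x)).toReal = ((α i t) (Iic x)).toReal -
        (1 - P.transpose).mulVec (fun j => ((β j t) (Iic x)).toReal) i)
    (cond2 : ∀ i (x : ℝ≥0),
      stieltjesZero (fun s => ((ξ i s) (Iic x)).toReal)
        (fun s => ((β i s) (Ioi x)).toReal))
    (cond3 : ∀ i (x : ℝ≥0),
      stieltjesZero (fun s => ((ξ i s) (Iic x)).toReal) (fun s => ι i s))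
    (cond4 : ∀ i (t : ℝ), 0 ≤ t → ((β i t) univ).toReal + ι i t = μ t i)
    (x : ℝ≥0) (j : Fin K) :
    IsSkorokhodRegulator (fun s => (vmvspNetput P α μ x s - Pᵀ *ᵥ vmvspRegulator β ι x s) j)
      (fun s => vmvspRegulator β ι x s j) := by
  obtain ⟨S₂, hS₂, hS₂neg, hS₂int⟩ := cond2 j x
  obtain ⟨S₃, hS₃, hS₃neg, hS₃int⟩ := cond3 j x
  have hIic := toReal_measure_Iic_eq_sub_vmvspRegulator μ β ι hβfin cond4 x
  have hS : ∀ s, 0 ≤ s → (S₂ + S₃) s = vmvspRegulator β ι x s j := fun s hs => by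
    rw [StieltjesFunction.add_apply, hS₂ s hs, hS₃ s hs]
    rfl
  -- `S₂ + S₃ ≥ 0` since it vanishes on `(-∞,0)`, while `(4)` and `μ 0 = 0` force it `≤ 0` at `0`.
  have hS0 : (S₂ + S₃) 0 = 0 := by
    have hpos : (S₂ + S₃) (-1) ≤ (S₂ + S₃) 0 := (S₂ + S₃).mono (by norm_num)
    rw [StieltjesFunction.add_apply, hS₂neg _ (by norm_num), hS₃neg _ (by norm_num)] at hpos
    have := hIic j (le_refl (0 : ℝ))
    linarith [hS 0 le_rfl, hμ0 j, (β j 0 (Iic x)).toReal_nonneg]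
  have hreg : IsSkorokhodRegulator
      (fun s => (vmvspNetput P α μ x s - Pᵀ *ᵥ vmvspRegulator β ι x s) j) ⇑(S₂ + S₃) := by
    refine (S₂ + S₃).isSkorokhodRegulator (z := fun s => (ξ j s (Iic x)).toReal) hS0
      (fun _ _ => ENNReal.toReal_nonneg) (fun s hs => ?_) ?_
    · have hβIic : (fun k => (β k s (Iic x)).toReal) = μ s - vmvspRegulator β ι x s :=
        funext fun k => hIic k hs
      rw [hS s hs, cond1 x s hs j, hβIic]
      simp only [vmvspNetput, mulVec_sub, sub_mulVec, one_mulVec, Pi.sub_apply]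
      ring
    · rw [StieltjesFunction.measure_add, Measure.restrict_add, lintegral_add_measure, hS₂int,
        hS₃int, add_zero]
  intro t ht
  have hregt := hreg t ht
  rwa [hS t ht] at hregt

end VMVSP

theorem vmvsp_uniqueness_general {K : ℕ}
    (P : Matrix (Fin K) (Fin K) ℝ)
    (hPnn : ∀ i j, 0 ≤ P i j)
    (hPconv : Filter.Tendsto (fun n : ℕ => P ^ n) Filter.atTop (nhds 0))
    (α : Fin K → ℝ → Measure ℝ≥0)
    (μ : ℝ → Fin K → ℝ) (hμ0 : ∀ i, μ 0 i = 0)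
    (ξ ξ' β β' : Fin K → ℝ → Measure ℝ≥0) (ι ι' : Fin K → ℝ → ℝ)
    (hfin : ∀ i t, IsFiniteMeasure (ξ i t) ∧ IsFiniteMeasure (β i t) ∧
      IsFiniteMeasure (ξ' i t) ∧ IsFiniteMeasure (β' i t))
    (cond1 : ∀ (x : ℝ≥0) (t : ℝ), 0 ≤ t → ∀ i,
      ((ξ i t) (Iic x)).toReal = ((α i t) (Iic x)).toReal -
        (1 - P.transpose).mulVec (fun j => ((β j t) (Iic x)).toReal) i)
    (cond2 : ∀ i (x : ℝ≥0),
      stieltjesZero (fun s => ((ξ i s) (Iic x)).toReal)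
        (fun s => ((β i s) (Ioi x)).toReal))
    (cond3 : ∀ i (x : ℝ≥0),
      stieltjesZero (fun s => ((ξ i s) (Iic x)).toReal) (fun s => ι i s))
    (cond4 : ∀ i (t : ℝ), 0 ≤ t → ((β i t) univ).toReal + ι i t = μ t i)
    (cond1' : ∀ (x : ℝ≥0) (t : ℝ), 0 ≤ t → ∀ i,
      ((ξ' i t) (Iic x)).toReal = ((α i t) (Iic x)).toReal -
        (1 - P.transpose).mulVec (fun j => ((β' j t) (Iic x)).toReal) i)
    (cond2' : ∀ i (x : ℝ≥0),
      stieltjesZero (fun s => ((ξ' i s) (Iic x)).toReal)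
        (fun s => ((β' i s) (Ioi x)).toReal))
    (cond3' : ∀ i (x : ℝ≥0),
      stieltjesZero (fun s => ((ξ' i s) (Iic x)).toReal) (fun s => ι' i s))
    (cond4' : ∀ i (t : ℝ), 0 ≤ t → ((β' i t) univ).toReal + ι' i t = μ t i) :
    ∀ i (t : ℝ), 0 ≤ t → ξ i t = ξ' i t ∧ β i t = β' i t ∧ ι i t = ι' i t := by
  intro i t ht
  have hPTconv : Tendsto (fun n : ℕ => Pᵀ ^ n) atTop (𝓝 0) := by
    simpa [Function.comp_def, transpose_pow] using
      (continuous_id.matrix_transpose.tendsto 0).comp hPconv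
  have hreg : ∀ x, vmvspRegulator β ι x t = vmvspRegulator β' ι' x t := fun x =>
    IsSkorokhodRegulator.eq_of_tendsto_pow Pᵀ (fun i j => hPnn j i) hPTconv
      (isSkorokhodRegulator_vmvspRegulator P α μ hμ0 ξ β ι (fun j s => (hfin j s).2.1)
        cond1 cond2 cond3 cond4 x)
      (isSkorokhodRegulator_vmvspRegulator P α μ hμ0 ξ' β' ι' (fun j s => (hfin j s).2.2.2)
        cond1' cond2' cond3' cond4' x) ht
  have hβ : ∀ j, β j t = β' j t := fun j =>
    have := (hfin j t).2.1
    have := (hfin j t).2.2.2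
    ext_of_toReal_measure_Iic fun x => by
      rw [toReal_measure_Iic_eq_sub_vmvspRegulator μ β ι (fun j s => (hfin j s).2.1) cond4 x j ht,
        toReal_measure_Iic_eq_sub_vmvspRegulator μ β' ι' (fun j s => (hfin j s).2.2.2) cond4' x j
          ht, hreg x]
  have hι : ι i t = ι' i t := by
    have := cond4 i t ht
    rw [hβ i] at this
    linarith [cond4' i t ht]
  have := (hfin i t).1
  have := (hfin i t).2.2.1
  refine ⟨ext_of_toReal_measure_Iic fun x => ?_, hβ i, hι⟩
  rw [cond1 x t ht i, cond1' x t ht i]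
  simp only [hβ]

/-- Uniqueness for the vector measure-valued Skorokhod problem (VMVSP): for a
convergent substochastic routing matrix `P`, `R = I − Pᵀ`, data `(α, μ)` with `α`
a nondecreasing path of finite measures and `μ` nondecreasing with `μ(0) = 0`,
any two tuples `(ξ, β, ι)` and `(ξ', β', ι')` satisfying
(1) `ξ[0,x] = α[0,x] − R β[0,x]`, (2) `∫ ξ^i_s[0,x] dβ^i_s(x,∞) = 0`,
(3) `∫ ξ^i_s[0,x] dι^i(s) = 0`, (4) `β[0,∞) + ι = μ`, coincide. -/
theorem vmvsp_uniqueness {K : ℕ}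
    (P : Matrix (Fin K) (Fin K) ℝ)
    (hPnn : ∀ i j, 0 ≤ P i j) (hPsub : ∀ i, ∑ j, P i j ≤ 1)
    (hPconv : Filter.Tendsto (fun n : ℕ => P ^ n) Filter.atTop (nhds 0))
    (α : Fin K → ℝ → Measure ℝ≥0)
    (hαfin : ∀ i t, IsFiniteMeasure (α i t))
    (hαmono : ∀ i, Monotone (α i))
    (μ : ℝ → Fin K → ℝ) (hμ0 : ∀ i, μ 0 i = 0)
    (hμmono : ∀ i, Monotone fun t => μ t i)
    (ξ ξ' β β' : Fin K → ℝ → Measure ℝ≥0) (ι ι' : Fin K → ℝ → ℝ)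
    (hfin : ∀ i t, IsFiniteMeasure (ξ i t) ∧ IsFiniteMeasure (β i t) ∧
      IsFiniteMeasure (ξ' i t) ∧ IsFiniteMeasure (β' i t))
    (hβmono : ∀ i, Monotone (β i)) (hβ'mono : ∀ i, Monotone (β' i))
    (hβrc : ∀ i (x : ℝ≥0) (t : ℝ),
      ContinuousWithinAt (fun s => ((β i s) (Iic x)).toReal) (Ici t) t)
    (hβ'rc : ∀ i (x : ℝ≥0) (t : ℝ),
      ContinuousWithinAt (fun s => ((β' i s) (Iic x)).toReal) (Ici t) t)
    (hιnn : ∀ i t, 0 ≤ t → 0 ≤ ι i t) (hι'nn : ∀ i t, 0 ≤ t → 0 ≤ ι' i t)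
    (cond1 : ∀ (x : ℝ≥0) (t : ℝ), 0 ≤ t → ∀ i,
      ((ξ i t) (Iic x)).toReal = ((α i t) (Iic x)).toReal -
        (1 - P.transpose).mulVec (fun j => ((β j t) (Iic x)).toReal) i)
    (cond2 : ∀ i (x : ℝ≥0),
      stieltjesZero (fun s => ((ξ i s) (Iic x)).toReal)
        (fun s => ((β i s) (Ioi x)).toReal))
    (cond3 : ∀ i (x : ℝ≥0),
      stieltjesZero (fun s => ((ξ i s) (Iic x)).toReal) (fun s => ι i s))
    (cond4 : ∀ i (t : ℝ), 0 ≤ t → ((β i t) univ).toReal + ι i t = μ t i)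
    (cond1' : ∀ (x : ℝ≥0) (t : ℝ), 0 ≤ t → ∀ i,
      ((ξ' i t) (Iic x)).toReal = ((α i t) (Iic x)).toReal -
        (1 - P.transpose).mulVec (fun j => ((β' j t) (Iic x)).toReal) i)
    (cond2' : ∀ i (x : ℝ≥0),
      stieltjesZero (fun s => ((ξ' i s) (Iic x)).toReal)
        (fun s => ((β' i s) (Ioi x)).toReal))
    (cond3' : ∀ i (x : ℝ≥0),
      stieltjesZero (fun s => ((ξ' i s) (Iic x)).toReal) (fun s => ι' i s))
    (cond4' : ∀ i (t : ℝ), 0 ≤ t → ((β' i t) univ).toReal + ι' i t = μ t i) :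
    ∀ i (t : ℝ), 0 ≤ t → ξ i t = ξ' i t ∧ β i t = β' i t ∧ ι i t = ι' i t :=
  vmvsp_uniqueness_general P hPnn hPconv α μ hμ0 ξ ξ' β β' ι ι' hfin cond1 cond2 cond3 cond4 cond1'
    cond2' cond3' cond4'
end

section
/- Induction bound for served mass over a deadline interval: in the prelimit hard EDF network, for t₁ < t₂ and an interval A = [t₃, t₄) ⊂ [0,T] with t₄ ≤ t₂, Σ_{i=1}^K (β̄^{is,N}_{t₂}(A) − β̄^{is,N}_{t₁}(A)) ≤ Σ_{n=0}^{⌊t₄/ε⌋} [ Σ_{i=1}^K (ᾱ^{i,N}_{t₂}(A−nε) − ᾱ^{i,N}_{t₁}(A−nε)) + Σ_{i=1}^K ξ̄^{i,N}_{t₁}(A−nε) + K/N ]. -/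
open MeasureTheory Set Finset

/-- `A` shifted left by `c` and intersected with `[0,∞)`. -/
def shiftSet (A : Set ℝ) (c : ℝ) : Set ℝ := {x : ℝ | x + c ∈ A} ∩ Set.Ici 0

/-!
Write `S(A) = Σ_i (β̄^{is}_{t₂}(A) − β̄^{is}_{t₁}(A))`. Summing the balance inequality over the
stations and routing the transfers `γ̄^{ji}` back through `γ̄^{j} ≈ β̄^{js}(· − ε)` gives the one-step
bound `S(A) ≤ [arrivals + initial content + K/N](A) + S(A − ε)`. Iterating along `A − nε` ends
once `nε ≥ t₄`, where the shifted interval is empty and its served mass vanishes.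
-/

def massIncrement (μ : ℝ → Measure ℝ) (s t : ℝ) (A : Set ℝ) : ℝ :=
  (μ t A).toReal - (μ s A).toReal

@[simp]
lemma massIncrement_empty (μ : ℝ → Measure ℝ) (s t : ℝ) : massIncrement μ s t ∅ = 0 := by
  simp [massIncrement]

lemma le_sum_range_add_of_le_add_succ {u v : ℕ → ℝ} (h : ∀ n, u n ≤ v n + u (n + 1)) (k : ℕ) :
    u 0 ≤ ∑ n ∈ range k, v n + u k := by
  induction k with
  | zero => simp
  | succ k ih => rw [sum_range_succ]; linarith [h k]

lemma measurableSet_shiftSet {A : Set ℝ} (hA : MeasurableSet A) (c : ℝ) :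
    MeasurableSet (shiftSet A c) :=
  (measurable_add_const c hA).inter measurableSet_Ici

lemma shiftSet_zero_of_subset {A : Set ℝ} (hA : A ⊆ Ici 0) : shiftSet A 0 = A := by
  ext x
  simp only [shiftSet, add_zero, ofPred_mem_eq, mem_inter_iff, and_iff_left_iff_imp]
  exact fun hx => hA hx

lemma shiftSet_shiftSet (A : Set ℝ) (c : ℝ) {d : ℝ} (hd : 0 ≤ d) :
    shiftSet (shiftSet A c) d = shiftSet A (c + d) := by
  ext x
  simp only [shiftSet, mem_inter_iff, mem_ofPred_eq, Set.mem_Ici, add_assoc, add_comm d c]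
  constructor
  · rintro ⟨⟨hA, -⟩, hx⟩
    exact ⟨hA, hx⟩
  · rintro ⟨hA, hx⟩
    exact ⟨⟨hA, by linarith⟩, hx⟩

lemma shiftSet_Ico_eq_empty {a b c : ℝ} (hc : b ≤ c) : shiftSet (Ico a b) c = ∅ := by
  ext x
  simp only [shiftSet, mem_inter_iff, mem_ofPred_eq, Set.mem_Ico, Set.mem_Ici,
    mem_empty_iff_false, iff_false]
  rintro ⟨⟨-, hlt⟩, hx⟩
  linarith

lemma sum_massIncrement_le_add_sum_massIncrement {K : ℕ} {t₁ t₂ δ : ℝ} {A B : Set ℝ}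
    {β ξ α : Fin K → ℝ → Measure ℝ} {γ : Fin K → Fin K → ℝ → Measure ℝ}
    (hbal : ∀ i, massIncrement (β i) t₁ t₂ A ≤
      massIncrement (α i) t₁ t₂ A + ∑ j, massIncrement (γ j i) t₁ t₂ A + (ξ i t₁ A).toReal)
    (hγβ : ∀ j, ∑ i, massIncrement (γ j i) t₁ t₂ A ≤ massIncrement (β j) t₁ t₂ B + δ) :
    ∑ i, massIncrement (β i) t₁ t₂ A ≤
      (∑ i, massIncrement (α i) t₁ t₂ A + ∑ i, (ξ i t₁ A).toReal + K * δ) +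
        ∑ i, massIncrement (β i) t₁ t₂ B := by
  have hserved := sum_le_sum fun i (_ : i ∈ Finset.univ) => hbal i
  have hrouted := sum_le_sum fun j (_ : j ∈ Finset.univ) => hγβ j
  rw [sum_comm] at hrouted
  simp only [sum_add_distrib, sum_const, card_univ, Fintype.card_fin, nsmul_eq_mul]
    at hserved hrouted
  linarith

theorem served_mass_interval_bound_general
    {K : ℕ} (N : ℕ) (ε : ℝ) (hε : 0 < ε)
    (T t₁ t₂ t₃ t₄ : ℝ)
    (hA : Set.Ico t₃ t₄ ⊆ Set.Icc 0 T)
    (β ξ αm : Fin K → ℝ → Measure ℝ) (γ : Fin K → Fin K → ℝ → Measure ℝ)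
    (hbal : ∀ i (A' : Set ℝ), MeasurableSet A' →
      (β i t₂ A').toReal - (β i t₁ A').toReal ≤
        (αm i t₂ A').toReal - (αm i t₁ A').toReal +
        (∑ j : Fin K, ((γ j i t₂ A').toReal - (γ j i t₁ A').toReal)) +
        (ξ i t₁ A').toReal)
    (hγβ : ∀ j (A' : Set ℝ), MeasurableSet A' →
      ∑ i : Fin K, ((γ j i t₂ A').toReal - (γ j i t₁ A').toReal) ≤
        (β j t₂ (shiftSet A' ε)).toReal - (β j t₁ (shiftSet A' ε)).toReal + 1 / N) :
    ∑ i : Fin K, ((β i t₂ (Set.Ico t₃ t₄)).toReal - (β i t₁ (Set.Ico t₃ t₄)).toReal) ≤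
      ∑ n ∈ Finset.range (⌊t₄ / ε⌋₊ + 1),
        ((∑ i : Fin K, ((αm i t₂ (shiftSet (Set.Ico t₃ t₄) (n * ε))).toReal -
            (αm i t₁ (shiftSet (Set.Ico t₃ t₄) (n * ε))).toReal)) +
          (∑ i : Fin K, (ξ i t₁ (shiftSet (Set.Ico t₃ t₄) (n * ε))).toReal) +
          K / N) := by
  set A := Ico t₃ t₄
  have hmeas (n : ℕ) : MeasurableSet (shiftSet A (n * ε)) :=
    measurableSet_shiftSet measurableSet_Ico _
  have hstep (n : ℕ) := sum_massIncrement_le_add_sum_massIncrement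
    (B := shiftSet A ((n + 1 : ℕ) * ε)) (fun i => hbal i _ (hmeas n)) fun j => by
      simpa only [massIncrement, shiftSet_shiftSet _ _ hε.le, Nat.cast_succ, add_one_mul]
        using hγβ j _ (hmeas n)
  have hA0 : shiftSet A ((0 : ℕ) * ε) = A := by
    rw [Nat.cast_zero, zero_mul, shiftSet_zero_of_subset fun x hx => (hA hx).1]
  have hempty : shiftSet A ((⌊t₄ / ε⌋₊ + 1 : ℕ) * ε) = ∅ := by
    refine shiftSet_Ico_eq_empty ((div_le_iff₀ hε).mp ?_)
    exact_mod_cast (Nat.lt_floor_add_one (t₄ / ε)).le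
  have htelescope := le_sum_range_add_of_le_add_succ hstep (⌊t₄ / ε⌋₊ + 1)
  rw [hA0, hempty] at htelescope
  simp only [massIncrement_empty, sum_const_zero, add_zero, mul_one_div] at htelescope
  exact htelescope

/-- Induction bound for the served mass over a deadline interval in the prelimit hard
EDF network: for `t₁ < t₂` and `A = [t₃,t₄) ⊆ [0,T]` with `t₄ ≤ t₂`,
`Σ_i (β̄^{is,N}_{t₂}(A) − β̄^{is,N}_{t₁}(A))` is bounded by the sum over
`n = 0, …, ⌊t₄/ε⌋` of shifted arrival increments, shifted initial queue contents,
and `K/N` error terms. -/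
theorem served_mass_interval_bound
    {K : ℕ} (N : ℕ) (hN : 0 < N) (ε : ℝ) (hε : 0 < ε)
    (T t₁ t₂ t₃ t₄ : ℝ) (h12 : t₁ < t₂) (h34 : t₃ ≤ t₄) (h42 : t₄ ≤ t₂)
    (hA : Set.Ico t₃ t₄ ⊆ Set.Icc 0 T)
    (β ξ αm : Fin K → ℝ → Measure ℝ) (γ : Fin K → Fin K → ℝ → Measure ℝ)
    (hfin : ∀ i t, IsFiniteMeasure (β i t) ∧ IsFiniteMeasure (ξ i t) ∧
      IsFiniteMeasure (αm i t))
    (hγfin : ∀ j i t, IsFiniteMeasure (γ j i t))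
    (hβmono : ∀ i (A' : Set ℝ), β i t₁ A' ≤ β i t₂ A')
    (hγmono : ∀ j i (A' : Set ℝ), γ j i t₁ A' ≤ γ j i t₂ A')
    (hbal : ∀ i (A' : Set ℝ), MeasurableSet A' →
      (β i t₂ A').toReal - (β i t₁ A').toReal ≤
        (αm i t₂ A').toReal - (αm i t₁ A').toReal +
        (∑ j : Fin K, ((γ j i t₂ A').toReal - (γ j i t₁ A').toReal)) +
        (ξ i t₁ A').toReal)
    (hγβ : ∀ j (A' : Set ℝ), MeasurableSet A' →
      ∑ i : Fin K, ((γ j i t₂ A').toReal - (γ j i t₁ A').toReal) ≤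
        (β j t₂ (shiftSet A' ε)).toReal - (β j t₁ (shiftSet A' ε)).toReal + 1 / N) :
    ∑ i : Fin K, ((β i t₂ (Set.Ico t₃ t₄)).toReal - (β i t₁ (Set.Ico t₃ t₄)).toReal) ≤
      ∑ n ∈ Finset.range (⌊t₄ / ε⌋₊ + 1),
        ((∑ i : Fin K, ((αm i t₂ (shiftSet (Set.Ico t₃ t₄) (n * ε))).toReal -
            (αm i t₁ (shiftSet (Set.Ico t₃ t₄) (n * ε))).toReal)) +
          (∑ i : Fin K, (ξ i t₁ (shiftSet (Set.Ico t₃ t₄) (n * ε))).toReal) +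
          K / N) :=
  served_mass_interval_bound_general N ε hε T t₁ t₂ t₃ t₄ hA β ξ αm γ hbal hγβ
end
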